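/- Let x, y ∈ Z and let γ be an isometric self-equivalence of Z. Assume: (i) E(x,y) ∩ E(x,γ(x)) = ∅; (ii) E(x,y) ∩ E(x,γ⁻¹(x)) = ∅; (iii) E(x,y) is a connected subset of Z; and (iv) E₀(x,y) is nonempty. Then E(x,y) is γ-invisible to x if and only if E₀(x,y) is γ-invisible to x. (In the paper this is stated for the complex bidisk H²_ℂ × H²_ℂ, whose bisectors E(x,y) are connected and whose componentwise bisectors E₀(x,y) are nonempty; these properties are recorded here as explicit hypotheses.) -/

import Mathlib

noncomputable section

variable {X₁ X₂ : Type*} [MetricSpace X₁] [MetricSpace X₂]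

/-- The equidistant hypersurface (bisector) of two points of the `L²` product. -/
def bisector (x y : WithLp 2 (X₁ × X₂)) : Set (WithLp 2 (X₁ × X₂)) :=
  {w | dist w x = dist w y}

/-- The componentwise bisector `E₀(x,y)`. -/
def bisector0 (x y : WithLp 2 (X₁ × X₂)) : Set (WithLp 2 (X₁ × X₂)) :=
  {w | dist w.ofLp.1 x.ofLp.1 = dist w.ofLp.1 y.ofLp.1 ∧ dist w.ofLp.2 x.ofLp.2 = dist w.ofLp.2 y.ofLp.2}

/-- A point `w` is `γ`-visible to `x` if `ρ(w,x) ≤ ρ(w,γ(x))` and `ρ(w,x) ≤ ρ(w,γ⁻¹(x))`. -/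
def Visible (γ : WithLp 2 (X₁ × X₂) ≃ᵢ WithLp 2 (X₁ × X₂))
    (x w : WithLp 2 (X₁ × X₂)) : Prop :=
  dist w x ≤ dist w (γ x) ∧ dist w x ≤ dist w (γ.symm x)

/-- A set `A` is `γ`-invisible to `x` if no point of `A` is `γ`-visible to `x`. -/
def Invisible (γ : WithLp 2 (X₁ × X₂) ≃ᵢ WithLp 2 (X₁ × X₂))
    (x : WithLp 2 (X₁ × X₂)) (A : Set (WithLp 2 (X₁ × X₂))) : Prop :=
  ∀ w ∈ A, ¬ Visible γ x w

/-- A continuous nonvanishing real function on a preconnected set that is negative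
somewhere is negative everywhere. -/
lemma neg_of_neg_aux {Z : Type*} [TopologicalSpace Z] {s : Set Z} (hs : IsPreconnected s)
    {f : Z → ℝ} (hf : ContinuousOn f s) (hnz : ∀ w ∈ s, f w ≠ 0)
    {w₀ : Z} (hw₀ : w₀ ∈ s) (hneg : f w₀ < 0) : ∀ w ∈ s, f w < 0 := by
  intro w hw
  rcases lt_or_gt_of_ne (hnz w hw) with h | h
  · exact h
  · obtain ⟨z, hz, hz0⟩ := hs.intermediate_value₂ hw₀ hw hf continuousOn_const
      hneg.le h.le
    exact absurd hz0 (hnz z hz)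

lemma bisector0_subset (x y : WithLp 2 (X₁ × X₂)) :
    bisector0 x y ⊆ bisector x y := by
  rintro w ⟨h1, h2⟩
  show dist w x = dist w y
  rw [WithLp.prod_dist_eq_add (p := 2) (by norm_num), WithLp.prod_dist_eq_add (p := 2) (by norm_num)]
  exact congrArg₂ (fun a b => (a ^ ENNReal.toReal 2 + b ^ ENNReal.toReal 2) ^ (1 / ENNReal.toReal 2)) h1 h2

theorem bisector_invisible_iff_bisector0_invisible
    (x y : WithLp 2 (X₁ × X₂)) (γ : WithLp 2 (X₁ × X₂) ≃ᵢ WithLp 2 (X₁ × X₂))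
    (h₁ : bisector x y ∩ bisector x (γ x) = ∅)
    (h₂ : bisector x y ∩ bisector x (γ.symm x) = ∅)
    (hconn : IsConnected (bisector x y))
    (hne : (bisector0 x y).Nonempty) :
    Invisible γ x (bisector x y) ↔ Invisible γ x (bisector0 x y) := by
  constructor
  · intro h w hw
    exact h w (bisector0_subset x y hw)
  · intro h w hw
    obtain ⟨w₀, hw₀⟩ := hne
    have hw₀E : w₀ ∈ bisector x y := bisector0_subset x y hw₀
    set f : WithLp 2 (X₁ × X₂) → ℝ := fun w => dist w (γ x) - dist w x with hfdef
    set g : WithLp 2 (X₁ × X₂) → ℝ := fun w => dist w (γ.symm x) - dist w x with hgdef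
    have hfc : ContinuousOn f (bisector x y) :=
      ((continuous_id.dist continuous_const).sub
        (continuous_id.dist continuous_const)).continuousOn
    have hgc : ContinuousOn g (bisector x y) :=
      ((continuous_id.dist continuous_const).sub
        (continuous_id.dist continuous_const)).continuousOn
    have hfnz : ∀ v ∈ bisector x y, f v ≠ 0 := by
      intro v hv hv0
      have : v ∈ bisector x y ∩ bisector x (γ x) :=
        ⟨hv, (sub_eq_zero.mp hv0).symm⟩
      simp [h₁] at this
    have hgnz : ∀ v ∈ bisector x y, g v ≠ 0 := by
      intro v hv hv0
      have : v ∈ bisector x y ∩ bisector x (γ.symm x) :=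
        ⟨hv, (sub_eq_zero.mp hv0).symm⟩
      simp [h₂] at this
    have hnv := h w₀ hw₀
    rw [Visible, not_and_or] at hnv
    rcases hnv with hv | hv
    · have hneg : f w₀ < 0 := by simp only [hfdef]; linarith [lt_of_not_ge hv]
      have := neg_of_neg_aux hconn.isPreconnected hfc hfnz hw₀E hneg w hw
      intro ⟨hvis, _⟩
      simp only [hfdef] at this
      linarith
    · have hneg : g w₀ < 0 := by simp only [hgdef]; linarith [lt_of_not_ge hv]
      have := neg_of_neg_aux hconn.isPreconnected hgc hgnz hw₀E hneg w hw
      intro ⟨_, hvis⟩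
      simp only [hgdef] at this
      linarith

end
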